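/- arXiv:1606.08944 — 11 statements merged into one kernel-verified Lean document; each statement's English description precedes it below -/
import Mathlib

section
/- Let n be a positive integer coprime to 6 and let S = (x1)(x2)(x3)(x4) be a minimal zero-sum sequence over Z/n with 1 ≤ xi < n. Then for every unit g of Z/n, the g-norm ||S||_g = (sum of least positive residues of g^{-1}·xi)/n equals 1, 2, or 3; moreover if ||S||_g = 3 for some generator g, then ||S||_{-g} = 1. Consequently ind(S) ∈ {1, 2}, and ind(S) = 2 if and only if ||S||_g = 2 for all generators g. -/
/-- `S = (x1)(x2)(x3)(x4)` is a minimal zero-sum sequence over `ℤ/n`: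
all entries lie in `[1, n)`, the total sum is `≡ 0 (mod n)`, and no proper
nonempty subsequence sums to `0 (mod n)`. -/
def IsMinZS4 (n x1 x2 x3 x4 : ℕ) : Prop :=
  (1 ≤ x1 ∧ x1 < n) ∧ (1 ≤ x2 ∧ x2 < n) ∧ (1 ≤ x3 ∧ x3 < n) ∧ (1 ≤ x4 ∧ x4 < n) ∧
  (x1 + x2 + x3 + x4) % n = 0 ∧
  (x1 + x2) % n ≠ 0 ∧ (x1 + x3) % n ≠ 0 ∧ (x1 + x4) % n ≠ 0 ∧
  (x2 + x3) % n ≠ 0 ∧ (x2 + x4) % n ≠ 0 ∧ (x3 + x4) % n ≠ 0 ∧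
  (x1 + x2 + x3) % n ≠ 0 ∧ (x1 + x2 + x4) % n ≠ 0 ∧
  (x1 + x3 + x4) % n ≠ 0 ∧ (x2 + x3 + x4) % n ≠ 0

/-- Sum of least nonnegative residues of the `g·xᵢ` mod `n`;
this equals `n·‖S‖_{g⁻¹}` for a unit `g` of `ℤ/n`. -/
def normSum (n g x1 x2 x3 x4 : ℕ) : ℕ :=
  (x1 * g) % n + (x2 * g) % n + (x3 * g) % n + (x4 * g) % n

/-- The index of `S`: the minimum of `‖S‖_g` over generators `g` of `ℤ/n`. -/
noncomputable def seqIndex (n x1 x2 x3 x4 : ℕ) : ℕ :=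
  sInf {m : ℕ | ∃ g, g < n ∧ Nat.Coprime g n ∧ normSum n g x1 x2 x3 x4 = m * n}

/-- `k` is good: `k` is a power of `2`, `k < n/6`, and
`F(k) = (2n − 2 − 2⌊((3k−1)/(3k))·n⌋)·k > (n−1)/2`. -/
def IsGood (n k : ℕ) : Prop :=
  (∃ l, k = 2 ^ l) ∧ 6 * k < n ∧
    (n - 1) / 2 < (2 * n - 2 - 2 * ((3 * k - 1) * n / (3 * k))) * k

/-!
Since `g` is a unit and `0 < xᵢ < n`, each residue `xᵢ g mod n` lies in `(0, n)` and the four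
of them sum to a multiple of `n`, hence to `n`, `2n` or `3n`. Replacing `g` by `n - g` replaces
each residue `r` by `n - r`, so `‖S‖_{-g} = 4 - ‖S‖_g`; in particular norm `3` turns into
norm `1`.
Thus the index is `1` unless every unit gives norm `2`, in which case it is `2`.
-/

theorem Nat.exists_lt_eq_mul_of_dvd {s n k : ℕ} (h : n ∣ s) (hs : s < k * n) :
    ∃ c < k, s = c * n := by
  obtain ⟨c, rfl⟩ := h
  exact ⟨c, Nat.lt_of_mul_lt_mul_right (by rwa [mul_comm]), mul_comm n c⟩

theorem Nat.mul_mod_ne_zero_of_coprime {n g x : ℕ} (hg : g.Coprime n) (hx : 0 < x)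
    (hxn : x < n) : x * g % n ≠ 0 := by
  intro h
  have : n ∣ x := hg.symm.dvd_of_dvd_mul_right (Nat.dvd_of_mod_eq_zero h)
  exact absurd (Nat.le_of_dvd hx this) (by omega)

theorem Nat.mod_add_mod_eq_self {a b n : ℕ} (ha : a % n ≠ 0) (hab : (a + b) % n = 0) :
    a % n + b % n = n := by
  have hb : b % n ≠ 0 := by
    intro hb
    rw [Nat.add_mod, hb, add_zero, Nat.mod_mod] at hab
    exact ha hab
  have hn : 0 < n := Nat.pos_of_ne_zero fun hn => by simp_all
  have hdvd : n ∣ a % n + b % n := by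
    rw [Nat.dvd_iff_mod_eq_zero, ← Nat.add_mod]; exact hab
  obtain ⟨c, hc, hsum⟩ := Nat.exists_lt_eq_mul_of_dvd hdvd
    (show a % n + b % n < 2 * n by have := Nat.mod_lt a hn; have := Nat.mod_lt b hn; omega)
  interval_cases c <;> omega

theorem Nat.mul_mod_add_mul_sub_mod {n g x : ℕ} (hx : x * g % n ≠ 0) (hg : g ≤ n) :
    x * g % n + x * (n - g) % n = n := by
  refine Nat.mod_add_mod_eq_self hx ?_
  rw [← mul_add, Nat.add_sub_cancel' hg, Nat.mul_mod_left]

namespace IsMinZS4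

variable {n x1 x2 x3 x4 : ℕ} (hS : IsMinZS4 n x1 x2 x3 x4)
include hS

theorem two_le : 2 ≤ n := by
  obtain ⟨⟨h, h'⟩, -⟩ := hS
  omega

theorem dvd_normSum (g : ℕ) : n ∣ normSum n g x1 x2 x3 x4 := by
  obtain ⟨-, -, -, -, hsum, -⟩ := hS
  have hmod : normSum n g x1 x2 x3 x4 ≡ (x1 + x2 + x3 + x4) * g [MOD n] := by
    unfold normSum
    rw [add_mul, add_mul, add_mul]
    exact (((Nat.mod_modEq _ _).add (Nat.mod_modEq _ _)).add (Nat.mod_modEq _ _)).add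
      (Nat.mod_modEq _ _)
  have hzero : x1 + x2 + x3 + x4 ≡ 0 [MOD n] :=
    Nat.modEq_zero_iff_dvd.2 (Nat.dvd_of_mod_eq_zero hsum)
  exact Nat.modEq_zero_iff_dvd.1 (by simpa using hmod.trans (hzero.mul_right g))

theorem mul_mod_ne_zero {g : ℕ} (hg : g.Coprime n) :
    x1 * g % n ≠ 0 ∧ x2 * g % n ≠ 0 ∧ x3 * g % n ≠ 0 ∧ x4 * g % n ≠ 0 := by
  obtain ⟨⟨h1, h1'⟩, ⟨h2, h2'⟩, ⟨h3, h3'⟩, ⟨h4, h4'⟩, -⟩ := hS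
  exact ⟨Nat.mul_mod_ne_zero_of_coprime hg h1 h1', Nat.mul_mod_ne_zero_of_coprime hg h2 h2',
    Nat.mul_mod_ne_zero_of_coprime hg h3 h3', Nat.mul_mod_ne_zero_of_coprime hg h4 h4'⟩

theorem normSum_pos {g : ℕ} (hg : g.Coprime n) : 0 < normSum n g x1 x2 x3 x4 := by
  have := (hS.mul_mod_ne_zero hg).1
  unfold normSum; omega

theorem normSum_eq {g : ℕ} (hg : g.Coprime n) :
    normSum n g x1 x2 x3 x4 = n ∨ normSum n g x1 x2 x3 x4 = 2 * n ∨
      normSum n g x1 x2 x3 x4 = 3 * n := by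
  have hn : 0 < n := by have := hS.two_le; omega
  have hlt : normSum n g x1 x2 x3 x4 < 4 * n := by
    have := Nat.mod_lt (x1 * g) hn; have := Nat.mod_lt (x2 * g) hn
    have := Nat.mod_lt (x3 * g) hn; have := Nat.mod_lt (x4 * g) hn
    unfold normSum; omega
  have hpos := hS.normSum_pos hg
  obtain ⟨c, hc, hsum⟩ := Nat.exists_lt_eq_mul_of_dvd (hS.dvd_normSum g) hlt
  interval_cases c <;> omega

theorem normSum_add_normSum_sub {g : ℕ} (hg : g.Coprime n) (hgn : g ≤ n) :
    normSum n g x1 x2 x3 x4 + normSum n (n - g) x1 x2 x3 x4 = 4 * n := by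
  obtain ⟨h1, h2, h3, h4⟩ := hS.mul_mod_ne_zero hg
  have := Nat.mul_mod_add_mul_sub_mod h1 hgn; have := Nat.mul_mod_add_mul_sub_mod h2 hgn
  have := Nat.mul_mod_add_mul_sub_mod h3 hgn; have := Nat.mul_mod_add_mul_sub_mod h4 hgn
  unfold normSum; omega

theorem normSum_sub_eq_of_eq_three_mul {g : ℕ} (hg : g.Coprime n) (hgn : g ≤ n)
    (h3 : normSum n g x1 x2 x3 x4 = 3 * n) : normSum n (n - g) x1 x2 x3 x4 = n := by
  have := hS.normSum_add_normSum_sub hg hgn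
  omega

theorem seqIndex_eq_one {g : ℕ} (hgn : g < n) (hg : g.Coprime n)
    (h2 : normSum n g x1 x2 x3 x4 ≠ 2 * n) : seqIndex n x1 x2 x3 x4 = 1 := by
  have hg0 : 0 < g := Nat.pos_of_ne_zero fun h => by
    have := hS.two_le; rw [h, Nat.coprime_zero_left] at hg; omega
  have h1 : 1 ∈ {m : ℕ | ∃ g, g < n ∧ g.Coprime n ∧ normSum n g x1 x2 x3 x4 = m * n} := by
    rcases hS.normSum_eq hg with h | h | h
    · exact ⟨g, hgn, hg, by rw [h, one_mul]⟩
    · exact absurd h h2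
    · exact ⟨n - g, by omega, (Nat.coprime_self_sub_left hgn.le).2 hg,
        by rw [hS.normSum_sub_eq_of_eq_three_mul hg hgn.le h, one_mul]⟩
  have h0 : seqIndex n x1 x2 x3 x4 ≠ 0 := by
    rw [seqIndex, Ne, Nat.sInf_eq_zero, not_or]
    exact ⟨fun ⟨g', _, hg', h⟩ => (hS.normSum_pos hg').ne' (by rw [h, zero_mul]),
      Set.nonempty_iff_ne_empty.1 ⟨1, h1⟩⟩
  exact le_antisymm (Nat.sInf_le h1) (Nat.one_le_iff_ne_zero.2 h0)

theorem seqIndex_eq_two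
    (h2 : ∀ g < n, g.Coprime n → normSum n g x1 x2 x3 x4 = 2 * n) :
    seqIndex n x1 x2 x3 x4 = 2 := by
  have hn : 0 < n := by have := hS.two_le; omega
  suffices {m : ℕ | ∃ g, g < n ∧ g.Coprime n ∧ normSum n g x1 x2 x3 x4 = m * n} = {2} by
    rw [seqIndex, this, csInf_singleton]
  ext m
  have h1 := Nat.coprime_one_left n
  refine ⟨fun ⟨g, hgn, hg, h⟩ => Nat.eq_of_mul_eq_mul_right hn (h.symm.trans (h2 g hgn hg)),
    fun hm => ⟨1, hS.two_le, h1, hm ▸ h2 1 hS.two_le h1⟩⟩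

end IsMinZS4

theorem stmt_0_general (n x1 x2 x3 x4 : ℕ)
    (hS : IsMinZS4 n x1 x2 x3 x4) :
    (∀ g : ℕ, Nat.Coprime g n →
      normSum n g x1 x2 x3 x4 = n ∨ normSum n g x1 x2 x3 x4 = 2 * n ∨
        normSum n g x1 x2 x3 x4 = 3 * n) ∧
    (∀ g : ℕ, g < n → Nat.Coprime g n → normSum n g x1 x2 x3 x4 = 3 * n →
      normSum n (n - g) x1 x2 x3 x4 = n) ∧
    (seqIndex n x1 x2 x3 x4 = 1 ∨ seqIndex n x1 x2 x3 x4 = 2) ∧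
    (seqIndex n x1 x2 x3 x4 = 2 ↔
      ∀ g : ℕ, g < n → Nat.Coprime g n → normSum n g x1 x2 x3 x4 = 2 * n) := by
  refine ⟨fun g hg => hS.normSum_eq hg,
    fun g hgn hg => hS.normSum_sub_eq_of_eq_three_mul hg hgn.le, ?_⟩
  by_cases h2 : ∀ g < n, g.Coprime n → normSum n g x1 x2 x3 x4 = 2 * n
  · exact ⟨Or.inr (hS.seqIndex_eq_two h2), iff_of_true (hS.seqIndex_eq_two h2) h2⟩
  · push Not at h2
    obtain ⟨g, hgn, hg, hne⟩ := h2
    have h1 := hS.seqIndex_eq_one hgn hg hne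
    exact ⟨Or.inl h1, by rw [h1]; exact iff_of_false (by decide) fun h => hne (h g hgn hg)⟩

theorem stmt_0 (n x1 x2 x3 x4 : ℕ) (hn : 0 < n) (h6 : Nat.Coprime n 6)
    (hS : IsMinZS4 n x1 x2 x3 x4) :
    (∀ g : ℕ, Nat.Coprime g n →
      normSum n g x1 x2 x3 x4 = n ∨ normSum n g x1 x2 x3 x4 = 2 * n ∨
        normSum n g x1 x2 x3 x4 = 3 * n) ∧
    (∀ g : ℕ, g < n → Nat.Coprime g n → normSum n g x1 x2 x3 x4 = 3 * n →
      normSum n (n - g) x1 x2 x3 x4 = n) ∧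
    (seqIndex n x1 x2 x3 x4 = 1 ∨ seqIndex n x1 x2 x3 x4 = 2) ∧
    (seqIndex n x1 x2 x3 x4 = 2 ↔
      ∀ g : ℕ, g < n → Nat.Coprime g n → normSum n g x1 x2 x3 x4 = 2 * n) :=
  stmt_0_general n x1 x2 x3 x4 hS
end

section
/- Let S = (x1)(x2)(x3)(x4) be a minimal zero-sum sequence over Z/n (with gcd(n,6)=1, 1 ≤ xi < n) of index 2. Then for every unit g of Z/n, exactly two indices i ∈ {1,2,3,4} satisfy (xi·g mod n) > n/2. -/
/-!
Write `rᵢ = (g·xᵢ mod n) ∈ [0, n)`. As `n` is odd, `2rᵢ ≠ n`, so `(2rᵢ mod n)` is `2rᵢ - n` when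
`rᵢ > n/2` and `2rᵢ` otherwise; hence `∑ (2rᵢ mod n) = 2∑ rᵢ - n·#{i | rᵢ > n/2}`. Oddness also makes
`2g` a unit, and index 2 applied to `g` and `2g` gives `2n = 4n - n·#{i | rᵢ > n/2}`.
-/

open Finset

lemma two_mul_mod_add_ite_of_lt {n r : ℕ} (hn : Odd n) (h : r < n) :
    (2 * r) % n + (if n < 2 * r then n else 0) = 2 * r := by
  split_ifs with hr
  · have hmod : (2 * r) % n = 2 * r - n := by
      rw [Nat.mod_eq_sub_mod hr.le, Nat.mod_eq_of_lt (show 2 * r - n < n by omega)]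
    omega
  · have h2r : 2 * r ≠ n := fun h2r => Nat.not_even_iff_odd.2 hn ⟨r, by omega⟩
    rw [Nat.mod_eq_of_lt (show 2 * r < n by omega), add_zero]

lemma sum_two_mul_mod_add_card_mul {ι : Type*} [Fintype ι] {n : ℕ} (hn : Odd n) (r : ι → ℕ)
    (hr : ∀ i, r i < n) :
    ∑ i, (2 * r i) % n + (univ.filter fun i => n < 2 * r i).card * n = 2 * ∑ i, r i := by
  rw [card_filter, sum_mul, ← sum_add_distrib, mul_sum]
  refine sum_congr rfl fun i _ => ?_
  have h := two_mul_mod_add_ite_of_lt hn (hr i)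
  split_ifs at h ⊢ <;> omega

lemma mul_two_mul_mod (x g n : ℕ) : (x * (2 * g)) % n = (2 * ((x * g) % n)) % n := by
  rw [show x * (2 * g) = 2 * (x * g) by ring, Nat.mul_mod_mod]

lemma normSum_eq_sum (n g x1 x2 x3 x4 : ℕ) :
    normSum n g x1 x2 x3 x4 = ∑ i : Fin 4, (![x1, x2, x3, x4] i * g) % n := by
  simp [normSum, Fin.sum_univ_four]

theorem stmt_2_general (n x1 x2 x3 x4 : ℕ) (h6 : Nat.Coprime n 6)
    (hInd2 : ∀ g : ℕ, Nat.Coprime g n → normSum n g x1 x2 x3 x4 = 2 * n) :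
    ∀ g : ℕ, Nat.Coprime g n →
      (Finset.univ.filter
        (fun i : Fin 4 => n < 2 * ((![x1, x2, x3, x4] i * g) % n))).card = 2 := by
  intro g hg
  have hodd : Odd n := (Nat.Coprime.coprime_dvd_right (by norm_num) h6).odd_of_right
  have hn : 0 < n := hodd.pos
  have hsum := hInd2 g hg
  have hsum_two := hInd2 (2 * g) (hodd.coprime_two_left.mul_left hg)
  simp only [normSum_eq_sum, mul_two_mul_mod] at hsum hsum_two
  have hcount := sum_two_mul_mod_add_card_mul hodd (fun i => (![x1, x2, x3, x4] i * g) % n)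
    fun i => Nat.mod_lt _ hn
  rw [hsum, hsum_two] at hcount
  exact Nat.eq_of_mul_eq_mul_right hn (by linarith)

theorem stmt_2 (n x1 x2 x3 x4 : ℕ) (hn : 0 < n) (h6 : Nat.Coprime n 6)
    (hS : IsMinZS4 n x1 x2 x3 x4)
    (hInd2 : ∀ g : ℕ, Nat.Coprime g n → normSum n g x1 x2 x3 x4 = 2 * n) :
    ∀ g : ℕ, Nat.Coprime g n →
      (Finset.univ.filter
        (fun i : Fin 4 => n < 2 * ((![x1, x2, x3, x4] i * g) % n))).card = 2 :=
  stmt_2_general n x1 x2 x3 x4 h6 hInd2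
end

section
/- Let S = (1)(x2)(x3)(x4) be a minimal zero-sum sequence over Z/n with gcd(n,6)=1, gcd(xi,n)=1 for all i, x3 = x2+1, and ind(S) = 2. Then x4 < x2 (indeed x2 ≥ (n+1)/2 and x4 < n/2). -/
/- Under index 2, exactly two of `1, x₂, x₂ + 1, x₄` exceed `n/2` (take `g = 1`). If `x₂` were
small, the two large ones would be `x₂ + 1` and `x₄`, so `2x₂ < n < 2x₂ + 2` and, `n` being odd,
`x₂ + x₃ = n`, a proper zero-sum subsequence. Hence `x₂` and `x₂ + 1` are the large entries
and `x₄` is small. -/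

theorem Finset.card_filter_vecCons_four {α : Type*} (p : α → Prop) [DecidablePred p]
    (a b c d : α) :
    (Finset.univ.filter fun i : Fin 4 => p (![a, b, c, d] i)).card =
      (if p a then 1 else 0) + (if p b then 1 else 0) + (if p c then 1 else 0) +
        (if p d then 1 else 0) := by
  rw [Finset.card_filter, Fin.sum_univ_four]
  rfl

theorem stmt_4_general (n x2 x3 x4 : ℕ) (h6 : Nat.Coprime n 6)
    (hS : IsMinZS4 n 1 x2 x3 x4)
    (h3 : x3 = x2 + 1)
    (hInd2 : ∀ g : ℕ, Nat.Coprime g n →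
      (Finset.univ.filter
        (fun i : Fin 4 => n < 2 * ((![1, x2, x3, x4] i * g) % n))).card = 2) :
    x4 < x2 ∧ n + 1 ≤ 2 * x2 ∧ 2 * x4 < n := by
  obtain ⟨-, ⟨-, hx2n⟩, ⟨-, hx3n⟩, ⟨-, hx4n⟩, -, -, -, -, h23, -, -, -, -, -, -⟩ := hS
  have hodd : n % 2 = 1 :=
    Nat.odd_iff.mp (Nat.coprime_two_right.mp (h6.coprime_dvd_right (by norm_num)))
  have hcount := hInd2 1 n.coprime_one_left
  rw [Finset.card_filter_vecCons_four (fun x => n < 2 * (x * 1 % n))] at hcount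
  simp only [mul_one, Nat.mod_eq_of_lt hx2n, Nat.mod_eq_of_lt hx3n, Nat.mod_eq_of_lt hx4n,
    Nat.mod_eq_of_lt (show 1 < n by omega)] at hcount
  have hx2_large : n < 2 * x2 := by
    by_contra hx2_small
    have hzero : x2 + x3 = n := by split_ifs at hcount <;> omega
    exact h23 (by rw [hzero, Nat.mod_self])
  split_ifs at hcount <;> omega

theorem stmt_4 (n x2 x3 x4 : ℕ) (hn : 0 < n) (h6 : Nat.Coprime n 6)
    (hS : IsMinZS4 n 1 x2 x3 x4)
    (hc2 : Nat.Coprime x2 n) (hc3 : Nat.Coprime x3 n) (hc4 : Nat.Coprime x4 n)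
    (h3 : x3 = x2 + 1)
    (hInd2 : ∀ g : ℕ, Nat.Coprime g n →
      (Finset.univ.filter
        (fun i : Fin 4 => n < 2 * ((![1, x2, x3, x4] i * g) % n))).card = 2) :
    x4 < x2 ∧ n + 1 ≤ 2 * x2 ∧ 2 * x4 < n :=
  stmt_4_general n x2 x3 x4 h6 hS h3 hInd2
end

section
/- Let n be a positive integer with gcd(n,6)=1. If k ≥ 2 is a 'good' integer (i.e., k is a power of 2, k < n/6, and F(k) := (2n − 2 − 2·⌊((3k−1)/(3k))·n⌋)·k > (n−1)/2), then k/2 is also good. -/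
theorem Nat.sub_one_add_sub_one_mul_div_le {d : ℕ} (hd : 0 < d) (n : ℕ) :
    n - 1 + (d - 1) * n / d ≤ 2 * ((2 * d - 1) * n / (2 * d)) := by
  rcases Nat.eq_zero_or_pos n with rfl | _
  · simp
  have hlo := Nat.div_mul_le_self ((d - 1) * n) d
  have hhi := Nat.lt_mul_div_succ ((2 * d - 1) * n) (show 0 < 2 * d by omega)
  generalize (d - 1) * n / d = b at hlo ⊢
  generalize (2 * d - 1) * n / (2 * d) = a at hhi ⊢
  suffices n + b < 2 * (a + 1) by omega
  -- `d * b ≤ (d - 1) * n` and `(2d - 1) * n < 2d * (a + 1)` give `2d * (n + b) < 4d * (a + 1)`.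
  refine Nat.lt_of_mul_lt_mul_right (a := 2 * d) ?_
  have hd1 : 1 ≤ 2 * d := by omega
  zify [hd, hd1] at hlo hhi ⊢
  linarith

-- `f(k)` and `F(k)` of the paper.
def goodFloor (n k : ℕ) : ℕ := (3 * k - 1) * n / (3 * k)

def goodWeight (n k : ℕ) : ℕ := (2 * n - 2 - 2 * goodFloor n k) * k

theorem sub_one_add_goodFloor_le {m : ℕ} (hm : 0 < m) (n : ℕ) :
    n - 1 + goodFloor n m ≤ 2 * goodFloor n (2 * m) := by
  unfold goodFloor
  rw [mul_left_comm 3 2 m]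
  exact Nat.sub_one_add_sub_one_mul_div_le (by omega) n

theorem goodWeight_two_mul_le {m : ℕ} (hm : 0 < m) (n : ℕ) :
    goodWeight n (2 * m) ≤ goodWeight n m := by
  have key := sub_one_add_goodFloor_le hm n
  calc goodWeight n (2 * m) = 2 * (2 * n - 2 - 2 * goodFloor n (2 * m)) * m := by
        unfold goodWeight; ring
    _ ≤ (2 * n - 2 - 2 * goodFloor n m) * m := Nat.mul_le_mul_right m (by omega)

theorem stmt_5_general (n k : ℕ) (hk : 2 ≤ k) (hgood : IsGood n k) : IsGood n (k / 2) := by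
  obtain ⟨⟨l, hl⟩, hlt, hF⟩ := hgood
  obtain ⟨j, rfl⟩ : ∃ j, l = j + 1 := Nat.exists_eq_succ_of_ne_zero (by rintro rfl; omega)
  obtain ⟨m, rfl⟩ : ∃ m, k = 2 * m := ⟨2 ^ j, by rw [hl, pow_succ']⟩
  rw [pow_succ', Nat.mul_right_inj two_ne_zero] at hl
  rw [Nat.mul_div_cancel_left m two_pos]
  exact ⟨⟨j, hl⟩, by omega, hF.trans_le (goodWeight_two_mul_le (by omega) n)⟩

theorem stmt_5 (n k : ℕ) (hn : 0 < n) (h6 : Nat.Coprime n 6)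
    (hk : 2 ≤ k) (hgood : IsGood n k) : IsGood n (k / 2) :=
  stmt_5_general n k hk hgood
end

section
/- Let n be coprime to 6 and set f(k) = ⌊((3k−1)/(3k))·n⌋. Let S = (1)(x2)(x3)(x4) be a minimal zero-sum sequence over Z/n with x3 = x2+1, gcd(xi,n)=1 for all i, and ind(S) = 2. If k is good and x2 ≥ f(k), then x2 ≥ f(2k). -/
/-! Write `x2 = n - 1 - r`. The multiplier `1` forces `x4 = 2r`; the hypothesis `f(k) ≤ x2`
says `3kr < n` and the claim says `6kr < n`. A multiplier `m` with `m(r + 1) ≤ n` sends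
`1, x2, x3` to the residues `m, n - m(r + 1), n - mr`, so index 2 forces `2mr < n`.
If `3k(r + 1) ≤ n`, the multiplier `3k` gives the claim. Otherwise `x2 = f(k)`, goodness of `k`
becomes `n ≤ 4kr`, and the multiplier `2k` gives a contradiction. -/

lemma sub_one_mul_div_le_iff {m n x : ℕ} (hm : 0 < m) (hx : x < n) :
    (m - 1) * n / m ≤ x ↔ m * (n - 1 - x) < n := by
  obtain ⟨m, rfl⟩ := Nat.exists_eq_add_of_lt hm
  obtain ⟨r, rfl⟩ := Nat.exists_eq_add_of_lt hx
  rw [← Nat.lt_succ_iff, Nat.div_lt_iff_lt_mul hm, show x + r + 1 - 1 - x = r by omega,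
    Nat.add_sub_cancel]
  constructor <;> intro h <;> nlinarith

lemma sub_one_mul_div_eq_iff {m n x : ℕ} (hm : 0 < m) (hx : x < n) :
    (m - 1) * n / m = x ↔ m * (n - 1 - x) < n ∧ n ≤ m * (n - x) := by
  rw [le_antisymm_iff, sub_one_mul_div_le_iff hm hx, Nat.le_div_iff_mul_le hm]
  refine and_congr_right fun _ => ?_
  obtain ⟨m, rfl⟩ := Nat.exists_eq_add_of_lt hm
  obtain ⟨r, rfl⟩ := Nat.exists_eq_add_of_lt hx
  rw [show x + r + 1 - x = r + 1 by omega, Nat.add_sub_cancel]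
  constructor <;> intro h <;> nlinarith

lemma mod_eq_sub_of_add_eq_mul {a d n m : ℕ} (h : a + d = n * m) (hd : 0 < d) (hdn : d ≤ n) :
    a % n = n - d := by
  obtain ⟨x, rfl⟩ : ∃ x, d = x + 1 := ⟨d - 1, by omega⟩
  rw [show a = n * m - (x + 1) by omega, Nat.mul_sub_mod (by omega), Nat.mod_eq_of_lt (by omega)]

section ConsecutivePair

variable {n m x2 r : ℕ}

lemma eq_two_mul_of_normSum_one_eq {x4 : ℕ} (hx2 : x2 + r + 1 = n) (hx3 : x2 + 1 < n)
    (hx4 : x4 < n) (hind : normSum n 1 1 x2 (x2 + 1) x4 = 2 * n) : x4 = 2 * r := by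
  simp only [normSum, mul_one, Nat.mod_eq_of_lt hx4, Nat.mod_eq_of_lt hx3,
    Nat.mod_eq_of_lt (show x2 < n by omega), Nat.mod_eq_of_lt (show 1 < n by omega)] at hind
  omega

lemma normSum_add_two_mul_mul (hx2 : x2 + r + 1 = n) (hm : 0 < m) (hr : 0 < r)
    (hmr : m * (r + 1) ≤ n) :
    normSum n m 1 x2 (x2 + 1) (2 * r) + 2 * m * r = 2 * n + 2 * m * r % n := by
  have hmn : m < n := by nlinarith
  have e2 : x2 * m % n = n - m * (r + 1) :=
    mod_eq_sub_of_add_eq_mul (m := m) (by rw [← hx2]; ring) (by positivity) hmr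
  have e3 : (x2 + 1) * m % n = n - m * r :=
    mod_eq_sub_of_add_eq_mul (m := m) (by rw [← hx2]; ring) (by positivity) (by nlinarith)
  rw [normSum, one_mul, Nat.mod_eq_of_lt hmn, e2, e3, show 2 * r * m = 2 * m * r by ring]
  have : m * (r + 1) = m * r + m := by ring
  have : 2 * m * r = 2 * (m * r) := by ring
  omega

lemma two_mul_mul_lt_of_normSum_eq (hx2 : x2 + r + 1 = n) (hm : 0 < m) (hr : 0 < r)
    (hmr : m * (r + 1) ≤ n) (hind : normSum n m 1 x2 (x2 + 1) (2 * r) = 2 * n) :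
    2 * m * r < n := by
  have h := normSum_add_two_mul_mul hx2 hm hr hmr
  rw [hind] at h
  exact (Nat.mod_eq_iff_lt (by omega)).1 (by omega)

end ConsecutivePair

theorem stmt_6_general (n x2 x3 x4 k : ℕ) (h6 : Nat.Coprime n 6)
    (hS : IsMinZS4 n 1 x2 x3 x4) (h3 : x3 = x2 + 1)
    (hInd2 : ∀ g : ℕ, Nat.Coprime g n → normSum n g 1 x2 x3 x4 = 2 * n)
    (hgood : IsGood n k) (hx2 : (3 * k - 1) * n / (3 * k) ≤ x2) :
    (3 * (2 * k) - 1) * n / (3 * (2 * k)) ≤ x2 := by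
  obtain ⟨⟨l, rfl⟩, h6k, hF⟩ := hgood
  obtain ⟨-, ⟨-, hx2n⟩, ⟨-, hx3n⟩, ⟨hx4pos, hx4n⟩, -⟩ := hS
  subst h3
  obtain ⟨r, hr⟩ : ∃ r, x2 + r + 1 = n := ⟨n - 1 - x2, by omega⟩
  obtain rfl := eq_two_mul_of_normSum_one_eq hr hx3n hx4n (hInd2 1 (Nat.coprime_one_left n))
  have hcop2 : Nat.Coprime 2 n := Nat.Coprime.coprime_dvd_left (by norm_num) h6.symm
  have hcop3 : Nat.Coprime 3 n := Nat.Coprime.coprime_dvd_left (by norm_num) h6.symm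
  have hr_eq : n - 1 - x2 = r := by omega
  rw [sub_one_mul_div_le_iff (by positivity) hx2n, hr_eq] at hx2 ⊢
  by_cases hcase : 3 * 2 ^ l * (r + 1) ≤ n
  · have := two_mul_mul_lt_of_normSum_eq hr (by positivity) (by omega) hcase
      (hInd2 _ (hcop3.mul_left (hcop2.pow_left l)))
    linarith
  · have hf : (3 * 2 ^ l - 1) * n / (3 * 2 ^ l) = x2 :=
      (sub_one_mul_div_eq_iff (by positivity) hx2n).2
        ⟨hr_eq ▸ hx2, by rw [show n - x2 = r + 1 by omega]; omega⟩
    rw [hf, show 2 * n - 2 - 2 * x2 = 2 * r by omega, Nat.div_lt_iff_lt_mul two_pos,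
      show 2 * r * 2 ^ l * 2 = 2 * (2 * 2 ^ l) * r by ring] at hF
    have := two_mul_mul_lt_of_normSum_eq hr (by positivity) (by omega) (by nlinarith)
      (hInd2 _ (hcop2.mul_left (hcop2.pow_left l)))
    omega

theorem stmt_6 (n x2 x3 x4 k : ℕ) (hn : 0 < n) (h6 : Nat.Coprime n 6)
    (hS : IsMinZS4 n 1 x2 x3 x4) (h3 : x3 = x2 + 1)
    (hc2 : Nat.Coprime x2 n) (hc3 : Nat.Coprime x3 n) (hc4 : Nat.Coprime x4 n)
    (hInd2 : ∀ g : ℕ, Nat.Coprime g n → normSum n g 1 x2 x3 x4 = 2 * n)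
    (hgood : IsGood n k) (hx2 : (3 * k - 1) * n / (3 * k) ≤ x2) :
    (3 * (2 * k) - 1) * n / (3 * (2 * k)) ≤ x2 :=
  stmt_6_general n x2 x3 x4 k h6 hS h3 hInd2 hgood hx2
end

section
/- Let n be coprime to 6, f(k) = ⌊((3k−1)/(3k))·n⌋, and suppose x2 = f(k) for a good integer k, with x1 = 1, x3 = x2+1, x4 = 2n−2−2x2, all coprime to n. Then exactly three of the four values (xi·k mod n), i = 1,...,4, exceed n/2; hence S = (x1)(x2)(x3)(x4) cannot have index 2. -/
theorem sub_one_mul_div_of_not_dvd {d n : ℕ} (hd : 0 < d) (hdn : ¬ d ∣ n) :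
    (d - 1) * n / d = n - n / d - 1 := by
  have hdiv := Nat.div_add_mod n d
  have hr : 0 < n % d := Nat.pos_of_ne_zero (mt Nat.dvd_of_mod_eq_zero hdn)
  have hrd := Nat.mod_lt n hd
  have hq : n / d + 1 ≤ n := by nlinarith
  rw [Nat.sub_sub]
  apply Nat.div_eq_of_lt_le
  · zify [hq, hd]
    nlinarith
  · zify [hq, hd]
    nlinarith

theorem sub_mul_mod_self_of_lt {n a k : ℕ} (hpos : 0 < a * k) (hlt : a * k < n) :
    (n - a) * k % n = n - a * k := by
  have hk : 0 < k := Nat.pos_of_mul_pos_left hpos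
  have hnk : n ≤ n * k := Nat.le_mul_of_pos_right n hk
  have hsplit : (n - a) * k = (n - a * k) + n * (k - 1) := by
    rw [Nat.sub_mul, Nat.mul_sub_one]
    omega
  rw [hsplit, Nat.add_mul_mod_self_left, Nat.mod_eq_of_lt (by omega)]

theorem card_filter_large_residues {n q k : ℕ} (hk : 0 < k) (hlo : 2 * ((q + 1) * k) < n)
    (hhi : n < 2 * (2 * q * k)) :
    (Finset.univ.filter
      (fun i : Fin 4 => n < 2 * ((![1, n - q - 1, n - q, 2 * q] i * k) % n))).card = 3 := by
  have hsucc : (q + 1) * k = q * k + k := add_one_mul q k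
  have htwo : 2 * q * k = 2 * (q * k) := mul_assoc 2 q k
  have hqk : 0 < q * k := by omega
  have e1 : 1 * k % n = k := by rw [one_mul, Nat.mod_eq_of_lt (by omega : k < n)]
  have e2 : (n - q - 1) * k % n = n - (q + 1) * k :=
    sub_mul_mod_self_of_lt (by omega) (by omega : (q + 1) * k < n)
  have e3 : (n - q) * k % n = n - q * k := sub_mul_mod_self_of_lt hqk (by omega : q * k < n)
  have e4 : 2 * q * k % n = 2 * q * k := Nat.mod_eq_of_lt (by omega : 2 * q * k < n)
  rw [Finset.card_filter, Fin.sum_univ_four]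
  simp only [Matrix.cons_val_zero, Matrix.cons_val_one, Matrix.cons_val_two,
    Matrix.cons_val_three, Matrix.head_cons, Matrix.tail_cons, e1, e2, e3, e4]
  rw [if_neg (by omega), if_pos (by omega), if_pos (by omega), if_pos (by omega)]

theorem stmt_7_general (n k x2 : ℕ) (h6 : Nat.Coprime n 6)
    (hgood : IsGood n k) (hx2 : x2 = (3 * k - 1) * n / (3 * k)) :
    (Finset.univ.filter
      (fun i : Fin 4 =>
        n < 2 * ((![1, x2, x2 + 1, 2 * n - 2 - 2 * x2] i * k) % n))).card = 3 ∧
    ¬ (∀ g : ℕ, Nat.Coprime g n →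
      (Finset.univ.filter
        (fun i : Fin 4 =>
          n < 2 * ((![1, x2, x2 + 1, 2 * n - 2 - 2 * x2] i * g) % n))).card = 2) := by
  obtain ⟨⟨l, hl⟩, h6k, hF⟩ := hgood
  have hodd : Odd n := Nat.coprime_two_right.mp (h6.coprime_dvd_right (by norm_num))
  have h3 : ¬ 3 ∣ n :=
    Nat.prime_three.coprime_iff_not_dvd.mp (h6.coprime_dvd_right (by norm_num)).symm
  have hk : 0 < k := hl ▸ Nat.two_pow_pos l
  have h3k : ¬ 3 * k ∣ n := fun h => h3 (dvd_trans (Dvd.intro k rfl) h)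
  set q := n / (3 * k)
  have hlo : 2 * ((q + 1) * k) < n := by
    have hq2 : 2 ≤ q := (Nat.le_div_iff_mul_le (by omega)).mpr (by omega)
    have hr : 0 < n % (3 * k) := Nat.pos_of_ne_zero (mt Nat.dvd_of_mod_eq_zero h3k)
    have hdiv : 3 * k * q + n % (3 * k) = n := Nat.div_add_mod n (3 * k)
    nlinarith
  have hx2q : x2 = n - q - 1 := hx2.trans (sub_one_mul_div_of_not_dvd (by omega) h3k)
  have hqn : q + 1 ≤ n := by nlinarith
  rw [← hx2, hx2q, show 2 * n - 2 - 2 * (n - q - 1) = 2 * q by omega] at hF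
  have hhi : n < 2 * (2 * q * k) := by have := Nat.odd_iff.mp hodd; omega
  subst hx2q
  rw [show n - q - 1 + 1 = n - q by omega, show 2 * n - 2 - 2 * (n - q - 1) = 2 * q by omega]
  have hcard := card_filter_large_residues hk hlo hhi
  refine ⟨hcard, fun h => ?_⟩
  have := h k (hl ▸ (Nat.coprime_two_left.mpr hodd).pow_left l)
  omega

theorem stmt_7 (n k x2 : ℕ) (hn : 0 < n) (h6 : Nat.Coprime n 6)
    (hgood : IsGood n k) (hx2 : x2 = (3 * k - 1) * n / (3 * k))
    (hc2 : Nat.Coprime x2 n) (hc3 : Nat.Coprime (x2 + 1) n)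
    (hc4 : Nat.Coprime (2 * n - 2 - 2 * x2) n) :
    (Finset.univ.filter
      (fun i : Fin 4 =>
        n < 2 * ((![1, x2, x2 + 1, 2 * n - 2 - 2 * x2] i * k) % n))).card = 3 ∧
    ¬ (∀ g : ℕ, Nat.Coprime g n →
      (Finset.univ.filter
        (fun i : Fin 4 =>
          n < 2 * ((![1, x2, x2 + 1, 2 * n - 2 - 2 * x2] i * g) % n))).card = 2) :=
  stmt_7_general n k x2 h6 hgood hx2
end

section
/- Let n be coprime to 6 and let S = (1)(x2)(x2+1)(x4) be a minimal zero-sum sequence over Z/n with ind(S) = 2 and gcd(xi,n)=1 for all i. If k is good then x2 ≥ ⌊((6k−1)/(6k))·n⌋. -/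
lemma Nat.sub_one_mul_div_eq {m n : ℕ} (hm : 0 < m) (hn : 0 < n) :
    (m - 1) * n / m = n - 1 - (n - 1) / m := by
  have h := Nat.mul_sub_div (n - 1) m n (by have := Nat.le_mul_of_pos_left n hm; omega)
  rw [Nat.sub_add_cancel hn, ← Nat.sub_one_mul] at h
  omega

lemma goodness_eq {n : ℕ} (k : ℕ) (hn : 0 < n) (hk : 0 < k) :
    (2 * n - 2 - 2 * ((3 * k - 1) * n / (3 * k))) * k = 2 * k * ((n - 1) / (3 * k)) := by
  have hq : (n - 1) / (3 * k) ≤ n - 1 := Nat.div_le_self _ _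
  rw [Nat.sub_one_mul_div_eq (by omega) hn, show 2 * n - 2 - 2 * (n - 1 - (n - 1) / (3 * k))
    = 2 * ((n - 1) / (3 * k)) by omega]
  ring

lemma two_mul_two_mul_div_le (a k : ℕ) :
    2 * (2 * k) * (a / (3 * (2 * k))) ≤ 2 * k * (a / (3 * k)) := by
  have h : 2 * (a / (3 * k) / 2) ≤ a / (3 * k) := Nat.mul_div_le _ _
  rw [Nat.div_div_eq_div_mul, show 3 * k * 2 = 3 * (2 * k) by ring] at h
  nlinarith

lemma mul_mod_add_mul_mod_of_add_eq {n u v g : ℕ} (hg : g.Coprime n) (hu : 0 < u) (hv : 0 < v)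
    (huv : u + v = n) : u * g % n + v * g % n = n := by
  have hn : 0 < n := by omega
  have hdvd : (u * g % n + v * g % n) % n = 0 := by
    rw [← Nat.add_mod, ← add_mul, huv, Nat.mul_mod_right]
  have hne : u * g % n ≠ 0 := fun h =>
    absurd (Nat.le_of_dvd hu ((Nat.Coprime.symm hg).dvd_of_dvd_mul_right
      (Nat.dvd_of_mod_eq_zero h))) (by omega)
  have hlt : u * g % n + v * g % n < 2 * n := by
    have := Nat.mod_lt (u * g) hn
    have := Nat.mod_lt (v * g) hn
    omega
  rcases Nat.lt_or_ge (u * g % n + v * g % n) n with h | h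
  · rw [Nat.mod_eq_of_lt h] at hdvd
    omega
  · rw [Nat.mod_eq_sub_mod h, Nat.mod_eq_of_lt (by omega)] at hdvd
    omega

/-- What `ind(S) = 2` says about `S = (1)(x₂)(x₂+1)(2d)`, `d = n - 1 - x₂`, once the complementary
pairs `x₂, d + 1` and `x₂ + 1, d` (each contributing exactly `n`) are cancelled. -/
def ResidueBalanced (n d : ℕ) : Prop :=
  ∀ g, g.Coprime n → g % n + 2 * d * g % n = (d + 1) * g % n + d * g % n

lemma residueBalanced_of_normSum_eq {n x2 d : ℕ} (hx2 : 0 < x2) (hd : 0 < d) (hn : x2 + d + 1 = n)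
    (hInd2 : ∀ g : ℕ, g.Coprime n → normSum n g 1 x2 (x2 + 1) (2 * d) = 2 * n) :
    ResidueBalanced n d := by
  intro g hg
  have h := hInd2 g hg
  have h₁ := mul_mod_add_mul_mod_of_add_eq hg hx2 (Nat.add_one_pos d) (by omega)
  have h₂ := mul_mod_add_mul_mod_of_add_eq hg (Nat.add_one_pos x2) hd (by omega)
  rw [normSum, one_mul] at h
  omega

namespace ResidueBalanced

variable {n d : ℕ} (hbal : ResidueBalanced n d)
include hbal

lemma two_mul_mul_lt {m : ℕ} (hm : m.Coprime n) (hlt : (d + 1) * m < n) : 2 * d * m < n := by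
  by_contra! hge
  have h := hbal m hm
  have e₁ : (d + 1) * m = d * m + m := add_one_mul d m
  have e₂ : 2 * d * m = 2 * (d * m) := mul_assoc 2 d m
  rw [Nat.mod_eq_of_lt (by omega : m < n), Nat.mod_eq_of_lt hlt,
    Nat.mod_eq_of_lt (by omega : d * m < n), Nat.mod_eq_sub_mod hge,
    Nat.mod_eq_of_lt (by omega)] at h
  omega

lemma six_mul_mul_lt {k : ℕ} (h2 : Nat.Coprime 2 n) (h3 : Nat.Coprime 3 n) (hk : k.Coprime n)
    (h6k : 6 * k < n) (hgood : (n - 1) / 2 < 2 * k * ((n - 1) / (3 * k)))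
    (h3kd : 3 * k * d < n) : 6 * k * d < n := by
  by_contra! hge
  have e₁ : 2 * d * (3 * k) = 6 * k * d := by ring
  have e₂ : (d + 1) * (3 * k) = 3 * k * d + 3 * k := by ring
  have hfloor : n ≤ 3 * k * d + 3 * k := by
    have := hbal.two_mul_mul_lt (Nat.Coprime.mul_left h3 hk)
    omega
  have hq : (n - 1) / (3 * k) = d :=
    Nat.div_eq_of_lt_le (by rw [mul_comm]; omega) (by rw [e₂]; omega)
  rw [hq] at hgood
  have e₃ : 2 * d * (2 * k) = 2 * (2 * k * d) := by ring
  have e₄ : (d + 1) * (2 * k) = 2 * k * d + 2 * k := by ring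
  have e₅ : 3 * k * d = 3 * (k * d) := by ring
  have e₆ : 2 * k * d = 2 * (k * d) := by ring
  have := hbal.two_mul_mul_lt (Nat.Coprime.mul_left h2 hk) (by omega)
  omega

lemma three_mul_lt (hn : n % 2 = 1) (h2d : 2 * d + 1 < n) : 3 * d < n := by
  have := hbal.two_mul_mul_lt (m := 2) (Nat.coprime_two_left.mpr (Nat.odd_iff.mpr hn)) (by omega)
  omega

lemma six_mul_two_pow_mul_lt (h2 : Nat.Coprime 2 n) (h3 : Nat.Coprime 3 n) (h3d : 3 * d < n)
    (l : ℕ) (h6k : 6 * 2 ^ l < n) (hgood : (n - 1) / 2 < 2 * 2 ^ l * ((n - 1) / (3 * 2 ^ l))) :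
    6 * 2 ^ l * d < n := by
  induction l with
  | zero =>
    exact hbal.six_mul_mul_lt h2 h3 (Nat.coprime_one_left n) h6k hgood (by simpa using h3d)
  | succ l ih =>
    rw [pow_succ'] at h6k hgood ⊢
    have ih := ih (by omega) (hgood.trans_le (two_mul_two_mul_div_le _ _))
    exact hbal.six_mul_mul_lt h2 h3 (Nat.Coprime.mul_left h2 (h2.pow_left l)) h6k hgood
      (by rw [show 3 * (2 * 2 ^ l) * d = 6 * 2 ^ l * d by ring]; exact ih)

end ResidueBalanced

theorem stmt_9_general (n x2 x4 k : ℕ) (h6 : Nat.Coprime n 6)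
    (hS : IsMinZS4 n 1 x2 (x2 + 1) x4)
    (hInd2 : ∀ g : ℕ, Nat.Coprime g n → normSum n g 1 x2 (x2 + 1) x4 = 2 * n)
    (hgood : IsGood n k) :
    (6 * k - 1) * n / (6 * k) ≤ x2 := by
  obtain ⟨-, ⟨hx2, -⟩, ⟨-, hx3⟩, ⟨hx4, hx4n⟩, -, -, -, h14, -⟩ := hS
  obtain ⟨⟨l, rfl⟩, h6k, hF⟩ := hgood
  have h2 : Nat.Coprime 2 n := (h6.coprime_dvd_right (by norm_num)).symm
  have h3 : Nat.Coprime 3 n := (h6.coprime_dvd_right (by norm_num)).symm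
  have hodd : n % 2 = 1 := Nat.odd_iff.mp (Nat.coprime_two_left.mp h2)
  set d := n - 1 - x2
  have hx4d : x4 = 2 * d := by
    have h := hInd2 1 (Nat.coprime_one_left n)
    simp only [normSum, mul_one] at h
    rw [Nat.mod_eq_of_lt (by omega), Nat.mod_eq_of_lt (by omega), Nat.mod_eq_of_lt hx3,
      Nat.mod_eq_of_lt hx4n] at h
    omega
  subst hx4d
  have hbal := residueBalanced_of_normSum_eq hx2 (by omega) (by omega) hInd2
  have h2d : 2 * d + 1 < n := by
    have : 1 + 2 * d ≠ n := fun h => h14 (by rw [h, Nat.mod_self])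
    omega
  rw [goodness_eq _ (by omega) (by positivity)] at hF
  have hlt := hbal.six_mul_two_pow_mul_lt h2 h3 (hbal.three_mul_lt hodd h2d) l h6k hF
  rw [Nat.sub_one_mul_div_eq (by positivity) (by omega)]
  have : d ≤ (n - 1) / (6 * 2 ^ l) :=
    (Nat.le_div_iff_mul_le (by positivity)).mpr (by rw [mul_comm]; omega)
  omega

theorem stmt_9 (n x2 x4 k : ℕ) (hn : 0 < n) (h6 : Nat.Coprime n 6)
    (hS : IsMinZS4 n 1 x2 (x2 + 1) x4)
    (hc2 : Nat.Coprime x2 n) (hc3 : Nat.Coprime (x2 + 1) n) (hc4 : Nat.Coprime x4 n)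
    (hInd2 : ∀ g : ℕ, Nat.Coprime g n → normSum n g 1 x2 (x2 + 1) x4 = 2 * n)
    (hgood : IsGood n k) :
    (6 * k - 1) * n / (6 * k) ≤ x2 :=
  stmt_9_general n x2 x4 k h6 hS hInd2 hgood
end

section
/- Let n be a positive integer coprime to 6 and let b ≥ 3 be an integer with 3·2^b < n < 3·2^{b+1}. Then k = 2^{b−2} is good; that is, k = 2^{b−2} < n/6 and (2n − 2 − 2⌊((3k−1)/(3k))·n⌋)·k > (n−1)/2. -/
/-! Write `d = ⌊n/(3k)⌋`. Since `3k ∤ n`, `⌊(3k-1)n/(3k)⌋ = n - d - 1`, so `F(k) = 2dk`;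
and `n < 3k(d+1) ≤ 4dk` as soon as `d ≥ 3`, i.e. `n ≥ 9k`. -/

theorem Nat.pred_mul_div_of_not_dvd {m n : ℕ} (hm : 0 < m) (h : ¬ m ∣ n) :
    (m - 1) * n / m = n - n / m - 1 := by
  obtain ⟨q, r, hr0, hrm, rfl⟩ : ∃ q r, 0 < r ∧ r < m ∧ n = m * q + r :=
    ⟨_, _, Nat.pos_of_ne_zero (mt Nat.dvd_of_mod_eq_zero h), Nat.mod_lt n hm,
      (Nat.div_add_mod n m).symm⟩
  rw [Nat.mul_add_div hm, Nat.div_eq_of_lt hrm, add_zero]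
  obtain ⟨t, ht⟩ : ∃ t, m * q + r = t + q + 1 :=
    ⟨m * q + r - q - 1, by have := Nat.le_mul_of_pos_left q hm; omega⟩
  rw [ht, show t + q + 1 - q - 1 = t by omega]
  obtain ⟨m, rfl⟩ : ∃ m', m = m' + 1 := ⟨m - 1, by omega⟩
  rw [Nat.add_sub_cancel]
  apply Nat.div_eq_of_lt_le <;> nlinarith

theorem pred_div_two_lt_of_nine_mul_le {n k : ℕ} (hk : 0 < k) (hn : 9 * k ≤ n)
    (h : ¬ 3 * k ∣ n) :
    (n - 1) / 2 < (2 * n - 2 - 2 * ((3 * k - 1) * n / (3 * k))) * k := by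
  rw [Nat.pred_mul_div_of_not_dvd (by omega) h]
  set d := n / (3 * k)
  have hd : 3 ≤ d := (Nat.le_div_iff_mul_le (by omega)).2 (by linarith)
  have hdn : d < n := Nat.div_lt_self (by omega) (by omega)
  have hnd : n < 3 * k * (d + 1) := Nat.lt_mul_div_succ n (by omega)
  have hn4 : n < 4 * (d * k) := by nlinarith
  have hF : 2 * n - 2 - 2 * (n - d - 1) = 2 * d := by omega
  rw [hF, mul_assoc]
  omega

theorem stmt_10_general (n b : ℕ) (h6 : Nat.Coprime n 6) (hb : 3 ≤ b)
    (h1 : 3 * 2 ^ b < n) :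
    IsGood n (2 ^ (b - 2)) := by
  have h4k : 2 ^ b = 4 * 2 ^ (b - 2) := by
    rw [mul_comm, ← pow_sub_mul_pow 2 (by omega : 2 ≤ b)]
    norm_num
  have h3 : ¬ 3 ∣ n :=
    (Nat.Prime.coprime_iff_not_dvd Nat.prime_three).1 (h6.coprime_dvd_right (by norm_num)).symm
  refine ⟨⟨b - 2, rfl⟩, by omega, pred_div_two_lt_of_nine_mul_le (by positivity) (by omega)
    fun h => h3 (dvd_of_mul_right_dvd h)⟩

theorem stmt_10 (n b : ℕ) (hn : 0 < n) (h6 : Nat.Coprime n 6) (hb : 3 ≤ b)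
    (h1 : 3 * 2 ^ b < n) (h2 : n < 3 * 2 ^ (b + 1)) :
    IsGood n (2 ^ (b - 2)) :=
  stmt_10_general n b h6 hb h1
end

section
/- Let n be coprime to 6 and S = (1)(x2)(x3)(x4) a minimal zero-sum sequence over Z/n with x3 = x2 + 1, gcd(xi,n) = 1 for all i, and ind(S) = 2. Then x2 ∈ {n−4, n−3}; equivalently S = (1)(n−4)(n−3)(6) or S = (1)(n−3)(n−2)(4). -/
lemma Nat.sub_mul_mod_of_mul_lt {n b g : ℕ} (hb : 0 < b) (hg : 0 < g) (h : b * g < n) :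
    (n - b) * g % n = n - b * g := by
  have hbg : 0 < b * g := Nat.mul_pos hb hg
  have hbn : b ≤ n := (Nat.le_mul_of_pos_right b hg).trans h.le
  have hsplit : (n - b) * g = (n - b * g) + n * (g - 1) := by
    have hg1 : 1 ≤ g := hg
    zify [hbn, h.le, hg1]
    ring
  rw [hsplit, Nat.add_mul_mod_self_left, Nat.mod_eq_of_lt (by omega)]

lemma normSum_one_sub_succ_sub_two_mul_eq_self {n g s : ℕ} (hg : 0 < g) (hlo : (s + 1) * g < n)
    (hhi : n < 2 * s * g) : normSum n g 1 (n - (s + 1)) (n - s) (2 * s) = n := by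
  have hs : 0 < s := Nat.pos_of_ne_zero (by rintro rfl; simp at hhi)
  rw [add_one_mul] at hlo
  rw [mul_assoc] at hhi
  have hx2 := Nat.sub_mul_mod_of_mul_lt (n := n) (b := s + 1) (by omega) hg (by rwa [add_one_mul])
  have hx3 := Nat.sub_mul_mod_of_mul_lt (n := n) hs hg (by omega)
  have hx4 : 2 * s * g % n = 2 * s * g - n := by
    rw [mul_assoc, Nat.mod_eq_sub_mod hhi.le, Nat.mod_eq_of_lt (by omega)]
  rw [normSum, one_mul, Nat.mod_eq_of_lt (by omega), hx2, hx3, hx4, add_one_mul, mul_assoc]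
  omega

lemma exists_two_pow_mul_three_pow_btwn {s n : ℕ} (hs : 4 ≤ s) (hn : 2 * (s + 1) < n) :
    ∃ a b : ℕ, (s + 1) * (2 ^ a * 3 ^ b) < n ∧ n < 2 * s * (2 ^ a * 3 ^ b) := by
  induction n using Nat.strong_induction_on with
  | _ n ih =>
    by_cases h4 : n < 4 * s
    · exact ⟨1, 0, by omega, by omega⟩
    by_cases h6 : n < 6 * s
    · exact ⟨0, 1, by omega, by omega⟩
    obtain ⟨a, b, hlo, hhi⟩ := ih (n / 2) (by omega) (by omega)
    refine ⟨a + 1, b, ?_, ?_⟩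
    · have : (s + 1) * (2 ^ (a + 1) * 3 ^ b) = 2 * ((s + 1) * (2 ^ a * 3 ^ b)) := by ring
      omega
    · have : 2 * s * (2 ^ (a + 1) * 3 ^ b) = 2 * (2 * s * (2 ^ a * 3 ^ b)) := by ring
      omega

lemma IsMinZS4.exists_of_normSum_one {n x2 x4 : ℕ} (hS : IsMinZS4 n 1 x2 (x2 + 1) x4)
    (hsum : normSum n 1 1 x2 (x2 + 1) x4 = 2 * n) :
    ∃ s, 2 ≤ s ∧ 2 * s + 1 < n ∧ x2 = n - (s + 1) ∧ x4 = 2 * s := by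
  obtain ⟨-, ⟨-, hx2⟩, ⟨-, hx3⟩, ⟨-, hx4⟩, -, -, h13, h14, -⟩ := hS
  simp only [normSum, mul_one] at hsum
  rw [Nat.mod_eq_of_lt (by omega), Nat.mod_eq_of_lt hx2, Nat.mod_eq_of_lt hx3,
    Nat.mod_eq_of_lt hx4] at hsum
  have hx3_ne : 1 + (x2 + 1) ≠ n := fun h => h13 (by rw [h, Nat.mod_self])
  have hx4_ne : 1 + x4 ≠ n := fun h => h14 (by rw [h, Nat.mod_self])
  exact ⟨n - x2 - 1, by omega, by omega, by omega, by omega⟩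

theorem stmt_11_general (n x2 x3 x4 : ℕ) (h6 : Nat.Coprime n 6)
    (hS : IsMinZS4 n 1 x2 x3 x4) (h3 : x3 = x2 + 1)
    (hInd2 : ∀ g : ℕ, Nat.Coprime g n → normSum n g 1 x2 x3 x4 = 2 * n) :
    (x2 = n - 4 ∧ x3 = n - 3 ∧ x4 = 6) ∨ (x2 = n - 3 ∧ x3 = n - 2 ∧ x4 = 4) := by
  subst h3
  have h2n : Nat.Coprime 2 n := (h6.coprime_dvd_right (by norm_num)).symm
  have h3n : Nat.Coprime 3 n := (h6.coprime_dvd_right (by norm_num)).symm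
  obtain ⟨s, hs2, hsn, rfl, rfl⟩ := hS.exists_of_normSum_one (hInd2 1 (Nat.coprime_one_left n))
  have hs3 : s ≤ 3 := by
    by_contra! hs4
    have hodd : n % 2 = 1 := Nat.odd_iff.mp (Nat.coprime_two_left.mp h2n)
    obtain ⟨a, b, hlo, hhi⟩ := exists_two_pow_mul_three_pow_btwn (n := n) hs4 (by omega)
    have hunit : Nat.Coprime (2 ^ a * 3 ^ b) n := (h2n.pow_left a).mul_left (h3n.pow_left b)
    have hnorm := hInd2 _ hunit
    rw [show n - (s + 1) + 1 = n - s by omega,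
      normSum_one_sub_succ_sub_two_mul_eq_self (by positivity) hlo hhi] at hnorm
    omega
  omega

theorem stmt_11 (n x2 x3 x4 : ℕ) (hn : 0 < n) (h6 : Nat.Coprime n 6)
    (hS : IsMinZS4 n 1 x2 x3 x4) (h3 : x3 = x2 + 1)
    (hc2 : Nat.Coprime x2 n) (hc3 : Nat.Coprime x3 n) (hc4 : Nat.Coprime x4 n)
    (hInd2 : ∀ g : ℕ, Nat.Coprime g n → normSum n g 1 x2 x3 x4 = 2 * n) :
    (x2 = n - 4 ∧ x3 = n - 3 ∧ x4 = 6) ∨ (x2 = n - 3 ∧ x3 = n - 2 ∧ x4 = 4) :=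
  stmt_11_general n x2 x3 x4 h6 hS h3 hInd2
end

section
/- Let n > 1000 be coprime to 6 and have at least three distinct prime factors. Then there exists an integer g with n/12 < g < n/8 and gcd(g, n) = 1. -/
/-!
Every number `2 ^ a * 3 ^ b` is coprime to `n`, and for `x ≥ 5` the interval `(x, 4x/3]` contains
such a number: check `x ≤ 9` by hand and otherwise double one lying in `(⌊x/2⌋, 4⌊x/2⌋/3]`.
Taking `x = ⌊n/12⌋` gives a `g` with `n/12 < g ≤ 4⌊n/12⌋/3 < n/8`.
-/

theorem exists_two_pow_mul_three_pow_between (x : ℕ) (hx : 5 ≤ x) :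
    ∃ a b : ℕ, x < 2 ^ a * 3 ^ b ∧ 3 * (2 ^ a * 3 ^ b) ≤ 4 * x := by
  induction x using Nat.strong_induction_on with
  | _ x ih =>
    by_cases hsmall : x ≤ 9
    · interval_cases x
      · exact ⟨1, 1, by norm_num, by norm_num⟩
      · exact ⟨3, 0, by norm_num, by norm_num⟩
      · exact ⟨3, 0, by norm_num, by norm_num⟩
      · exact ⟨0, 2, by norm_num, by norm_num⟩
      · exact ⟨2, 1, by norm_num, by norm_num⟩
    · obtain ⟨a, b, hlt, hle⟩ := ih (x / 2) (by omega) (by omega)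
      refine ⟨a + 1, b, ?_, ?_⟩ <;>
      · rw [pow_succ, mul_right_comm]
        omega

theorem Nat.Coprime.two_pow_mul_three_pow_left {n : ℕ} (h6 : n.Coprime 6) (a b : ℕ) :
    (2 ^ a * 3 ^ b).Coprime n := by
  have h2 : Nat.Coprime 2 n := (h6.coprime_dvd_right (by norm_num)).symm
  have h3 : Nat.Coprime 3 n := (h6.coprime_dvd_right (by norm_num)).symm
  exact (h2.pow_left a).mul_left (h3.pow_left b)

theorem stmt_12_general (n : ℕ) (hn : 1000 < n) (h6 : Nat.Coprime n 6) :
    ∃ g : ℕ, n < 12 * g ∧ 8 * g < n ∧ Nat.Coprime g n := by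
  obtain ⟨a, b, hlt, hle⟩ := exists_two_pow_mul_three_pow_between (n / 12) (by omega)
  exact ⟨2 ^ a * 3 ^ b, by omega, by omega, h6.two_pow_mul_three_pow_left a b⟩

theorem stmt_12 (n : ℕ) (hn : 1000 < n) (h6 : Nat.Coprime n 6)
    (hpf : 3 ≤ n.primeFactors.card) :
    ∃ g : ℕ, n < 12 * g ∧ 8 * g < n ∧ Nat.Coprime g n :=
  stmt_12_general n hn h6
end

section
/- Let n be coprime to 6 and suppose g is an integer with gcd(g,n)=1 and n/12 < g < n/8. Then (1·g mod n) < n/2, ((n−4)·g mod n) > n/2, ((n−3)·g mod n) > n/2, and (6·g mod n) > n/2. Consequently the minimal zero-sum sequence S = (1)(n−4)(n−3)(6) over Z/n has index 1. -/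
/-!
Since `8g < n < 12g`, the residues of `g, (n-4)g, (n-3)g, 6g` are `g, n-4g, n-3g, 6g` with no
reduction beyond a single subtraction, which gives the four inequalities. For the index, `n` is
odd, so `2g` is a unit, and its residues `2g, n-8g, n-6g, 12g-n` sum to exactly `n`.
-/

theorem Nat.sub_mul_mod_of_lt {n k g : ℕ} (hpos : 0 < k * g) (hlt : k * g < n) :
    ((n - k) * g) % n = n - k * g := by
  have hg : 1 ≤ g := Nat.pos_of_mul_pos_left hpos
  have hk : k ≤ n := (Nat.le_mul_of_pos_right k hg).trans hlt.le
  have hsplit : (n - k) * g = (n - k * g) + n * (g - 1) := by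
    rw [Nat.sub_mul, Nat.mul_sub, mul_one]
    have : n ≤ n * g := Nat.le_mul_of_pos_right n hg
    omega
  rw [hsplit, Nat.add_mul_mod_self_left, Nat.mod_eq_of_lt (by omega)]

theorem Nat.mod_eq_sub_of_le_of_lt_two_mul {a n : ℕ} (hle : n ≤ a) (hlt : a < 2 * n) :
    a % n = a - n := by
  rw [Nat.mod_eq_sub_mod hle, Nat.mod_eq_of_lt (by omega)]

theorem seqIndex_eq_one {n x1 x2 x3 x4 : ℕ} (hn : 1 < n) (hx1 : x1.Coprime n)
    (h : ∃ g < n, g.Coprime n ∧ normSum n g x1 x2 x3 x4 = n) :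
    seqIndex n x1 x2 x3 x4 = 1 := by
  obtain ⟨g, hgn, hg, hsum⟩ := h
  refine le_antisymm (Nat.sInf_le ⟨g, hgn, hg, by rw [hsum, one_mul]⟩) ?_
  refine le_csInf ⟨1, g, hgn, hg, by rw [hsum, one_mul]⟩ ?_
  rintro m ⟨g', hg'n, hg', hsum'⟩
  refine Nat.one_le_iff_ne_zero.mpr fun hm => ?_
  have hdvd : n ∣ x1 * g' := by
    unfold normSum at hsum'
    rw [hm, zero_mul] at hsum'
    exact Nat.dvd_of_mod_eq_zero (by omega)
  have hg'0 : g' = 0 := Nat.eq_zero_of_dvd_of_lt (hx1.symm.dvd_of_dvd_mul_left hdvd) hg'n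
  rw [hg'0, Nat.coprime_zero_left] at hg'
  omega

theorem stmt_13 (n g : ℕ) (h6 : Nat.Coprime n 6) (hg : Nat.Coprime g n)
    (h1 : n < 12 * g) (h2 : 8 * g < n) :
    2 * ((1 * g) % n) < n ∧
    n < 2 * (((n - 4) * g) % n) ∧
    n < 2 * (((n - 3) * g) % n) ∧
    n < 2 * ((6 * g) % n) ∧
    seqIndex n 1 (n - 4) (n - 3) 6 = 1 := by
  have e1 : (1 * g) % n = g := by rw [one_mul, Nat.mod_eq_of_lt (by omega)]
  have e4 : ((n - 4) * g) % n = n - 4 * g := Nat.sub_mul_mod_of_lt (by omega) (by omega)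
  have e3 : ((n - 3) * g) % n = n - 3 * g := Nat.sub_mul_mod_of_lt (by omega) (by omega)
  have e6 : (6 * g) % n = 6 * g := Nat.mod_eq_of_lt (by omega)
  refine ⟨by omega, by omega, by omega, by omega, ?_⟩
  have hodd : Nat.Coprime 2 n := (Nat.Coprime.coprime_dvd_right (by norm_num) h6).symm
  refine seqIndex_eq_one (by omega) (Nat.coprime_one_left n)
    ⟨2 * g, by omega, hodd.mul_left hg, ?_⟩
  have f1 : (1 * (2 * g)) % n = 2 * g := by rw [one_mul, Nat.mod_eq_of_lt (by omega)]
  have f4 : ((n - 4) * (2 * g)) % n = n - 4 * (2 * g) := Nat.sub_mul_mod_of_lt (by omega) (by omega)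
  have f3 : ((n - 3) * (2 * g)) % n = n - 3 * (2 * g) := Nat.sub_mul_mod_of_lt (by omega) (by omega)
  have f6 : (6 * (2 * g)) % n = 6 * (2 * g) - n :=
    Nat.mod_eq_sub_of_le_of_lt_two_mul (by omega) (by omega)
  unfold normSum
  omega
end
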